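/- arXiv:2207.00851 — 2 statements merged into one kernel-verified Lean document; each statement's English description precedes it below -/
import Mathlib

section
/- Given a weak functional completeness structure Φ for the action ▷ of V on D, every functor F : C → D carries a strong functor structure F̂ with underlying ordinary functor F, defined on f : Γ ▷ X → Y by F̂⟨Γ⟩f = Φ_Γ(γ ↦ F(f⁻(γ))); moreover every natural transformation α : F ⇒ G between ordinary functors is a strong natural transformation F̂ ⇒ Ĝ for the strong structures thus constructed. -/
open CategoryTheory MonoidalCategory

universe v₁ v₂ v₃ u₁ u₂ u₃

/-- A left action of a monoidal category `V` on a category `C`. -/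
structure LeftAction (V : Type u₁) [Category.{v₁} V] [MonoidalCategory V]
    (C : Type u₂) [Category.{v₂} C] where
  F : V ⥤ C ⥤ C
  lam : ∀ X : C, (F.obj (𝟙_ V)).obj X ≅ X
  lam_natural : ∀ {X Y : C} (f : X ⟶ Y),
    (F.obj (𝟙_ V)).map f ≫ (lam Y).hom = (lam X).hom ≫ f
  assoc : ∀ (Γ' Γ : V) (X : C),
    (F.obj (Γ' ⊗ Γ)).obj X ≅ (F.obj Γ').obj ((F.obj Γ).obj X)
  assoc_natural : ∀ {Γ' Δ' Γ Δ : V} (u : Γ' ⟶ Δ') (v : Γ ⟶ Δ) {X Y : C} (f : X ⟶ Y),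
    (F.map (u ⊗ₘ v)).app X ≫ (F.obj (Δ' ⊗ Δ)).map f ≫ (assoc Δ' Δ Y).hom
      = (assoc Γ' Γ X).hom ≫ (F.map u).app ((F.obj Γ).obj X)
          ≫ (F.obj Δ').map ((F.map v).app X ≫ (F.obj Δ).map f)
  triangle : ∀ (Γ : V) (X : C),
    (F.map (ρ_ Γ).inv).app X ≫ (assoc Γ (𝟙_ V) X).hom ≫ (F.obj Γ).map (lam X).hom = 𝟙 _
  unit_assoc : ∀ (Γ : V) (X : C),
    (assoc (𝟙_ V) Γ X).hom ≫ (lam ((F.obj Γ).obj X)).hom = (F.map (λ_ Γ).hom).app X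
  pentagon : ∀ (Γ₁ Γ₂ Γ₃ : V) (X : C),
    (F.map (α_ Γ₁ Γ₂ Γ₃).hom).app X ≫ (assoc Γ₁ (Γ₂ ⊗ Γ₃) X).hom
        ≫ (F.obj Γ₁).map (assoc Γ₂ Γ₃ X).hom
      = (assoc (Γ₁ ⊗ Γ₂) Γ₃ X).hom ≫ (assoc Γ₁ Γ₂ ((F.obj Γ₃).obj X)).hom

namespace LeftAction

variable {V : Type u₁} [Category.{v₁} V] [MonoidalCategory V]
variable {C : Type u₂} [Category.{v₂} C] {D : Type u₃} [Category.{v₃} D]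

/-- `a.act Γ X` is the action of `Γ` on an object `X`, written `Γ ▷ X` in the paper. -/
abbrev act (a : LeftAction V C) (Γ : V) (X : C) : C := (a.F.obj Γ).obj X

/-- The action of `Γ` on a morphism, `Γ ▷ f`. -/
abbrev actMap (a : LeftAction V C) (Γ : V) {X Y : C} (f : X ⟶ Y) :
    a.act Γ X ⟶ a.act Γ Y := (a.F.obj Γ).map f

/-- The action of a morphism of `V` on an object, `u ▷ X`. -/
abbrev actHom (a : LeftAction V C) {Γ Δ : V} (u : Γ ⟶ Δ) (X : C) :
    a.act Γ X ⟶ a.act Δ X := (a.F.map u).app X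

/-- Applying a morphism `f : Γ ▷ X ⟶ Y` to a point `γ : I ⟶ Γ`,
written `f⁻(γ)` in the paper. -/
def papp (a : LeftAction V C) {Γ : V} {X Y : C}
    (f : a.act Γ X ⟶ Y) (γ : 𝟙_ V ⟶ Γ) : X ⟶ Y :=
  (a.lam X).inv ≫ a.actHom γ X ≫ f

end LeftAction

/-- A strength for a functor `F : C ⥤ D`, with respect to left actions of `V`
on `C` and on `D`. -/
structure Strength {V : Type u₁} [Category.{v₁} V] [MonoidalCategory V]
    {C : Type u₂} [Category.{v₂} C] {D : Type u₃} [Category.{v₃} D]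
    (a : LeftAction V C) (b : LeftAction V D) (F : C ⥤ D) where
  str : ∀ (Γ : V) (X : C), b.act Γ (F.obj X) ⟶ F.obj (a.act Γ X)
  natural_fst : ∀ {Γ Δ : V} (u : Γ ⟶ Δ) (X : C),
    b.actHom u (F.obj X) ≫ str Δ X = str Γ X ≫ F.map (a.actHom u X)
  natural_snd : ∀ (Γ : V) {X Y : C} (f : X ⟶ Y),
    b.actMap Γ (F.map f) ≫ str Γ Y = str Γ X ≫ F.map (a.actMap Γ f)
  str_unit : ∀ X : C, str (𝟙_ V) X ≫ F.map (a.lam X).hom = (b.lam (F.obj X)).hom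
  str_assoc : ∀ (Γ' Γ : V) (X : C),
    (b.assoc Γ' Γ (F.obj X)).hom ≫ b.actMap Γ' (str Γ X) ≫ str Γ' (a.act Γ X)
      = str (Γ' ⊗ Γ) X ≫ F.map (a.assoc Γ' Γ X).hom

/-- A strong functor structure on an assignment of objects `obj : C → D` :
operations `F⟨Γ⟩` sending `f : Γ ▷ X ⟶ Y` to `F⟨Γ⟩ f : Γ ▷ F X ⟶ F Y`,
natural in `Γ` and compatible with the unitors and associators. -/
structure StrongFunctorStr {V : Type u₁} [Category.{v₁} V] [MonoidalCategory V]
    {C : Type u₂} [Category.{v₂} C] {D : Type u₃} [Category.{v₃} D]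
    (a : LeftAction V C) (b : LeftAction V D) (obj : C → D) where
  smap : ∀ {Γ : V} {X Y : C}, (a.act Γ X ⟶ Y) → (b.act Γ (obj X) ⟶ obj Y)
  natural : ∀ {Γ Δ : V} (u : Γ ⟶ Δ) {X Y : C} (f : a.act Δ X ⟶ Y),
    smap (a.actHom u X ≫ f) = b.actHom u (obj X) ≫ smap f
  unit : ∀ X : C, smap (a.lam X).hom = (b.lam (obj X)).hom
  comp : ∀ {Γ' Γ : V} {X Y Z : C} (f : a.act Γ X ⟶ Y) (g : a.act Γ' Y ⟶ Z),
    smap ((a.assoc Γ' Γ X).hom ≫ a.actMap Γ' f ≫ g)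
      = (b.assoc Γ' Γ (obj X)).hom ≫ b.actMap Γ' (smap f) ≫ smap g

/-- The strong-naturality condition for `τ : F ⟶ G` with respect to strengths
`sF`, `sG` : `τ_Y ∘ F⟨Γ⟩f = G⟨Γ⟩f ∘ (Γ ▷ τ_X)`, where `F⟨Γ⟩f = F f ∘ str`. -/
def IsStrongNatTrans {V : Type u₁} [Category.{v₁} V] [MonoidalCategory V]
    {C : Type u₂} [Category.{v₂} C] {D : Type u₃} [Category.{v₃} D]
    {a : LeftAction V C} {b : LeftAction V D} {F G : C ⥤ D}
    (sF : Strength a b F) (sG : Strength a b G) (τ : F ⟶ G) : Prop :=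
  ∀ (Γ : V) {X Y : C} (f : a.act Γ X ⟶ Y),
    (sF.str Γ X ≫ F.map f) ≫ τ.app Y = b.actMap Γ (τ.app X) ≫ (sG.str Γ X ≫ G.map f)

/-- A weak functional completeness structure for an action of `V` on `D`:
an assignment of a morphism `Φ_Γ ζ : Γ ▷ X ⟶ Y` with `(Φ_Γ ζ)⁻ = ζ` to each
function `ζ : V(I,Γ) → D(X,Y)`, natural in `Γ`, `X`, `Y` and compatible with
the tensor of `V`. -/
structure WFCStructure {V : Type u₁} [Category.{v₁} V] [MonoidalCategory V]
    {D : Type u₃} [Category.{v₃} D] (b : LeftAction V D) where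
  Phi : ∀ (Γ : V) (X Y : D), ((𝟙_ V ⟶ Γ) → (X ⟶ Y)) → (b.act Γ X ⟶ Y)
  papp_Phi : ∀ (Γ : V) (X Y : D) (ζ : (𝟙_ V ⟶ Γ) → (X ⟶ Y)) (γ : 𝟙_ V ⟶ Γ),
    b.papp (Phi Γ X Y ζ) γ = ζ γ
  natural_ctx : ∀ {Γ Δ : V} (u : Γ ⟶ Δ) (X Y : D)
      (ζ : (𝟙_ V ⟶ Δ) → (X ⟶ Y)),
    b.actHom u X ≫ Phi Δ X Y ζ = Phi Γ X Y (fun γ => ζ (γ ≫ u))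
  natural_dom : ∀ (Γ : V) {X' X Y : D} (h : X' ⟶ X)
      (ζ : (𝟙_ V ⟶ Γ) → (X ⟶ Y)),
    b.actMap Γ h ≫ Phi Γ X Y ζ = Phi Γ X' Y (fun γ => h ≫ ζ γ)
  natural_cod : ∀ (Γ : V) {X Y Y' : D} (k : Y ⟶ Y')
      (ζ : (𝟙_ V ⟶ Γ) → (X ⟶ Y)),
    Phi Γ X Y ζ ≫ k = Phi Γ X Y' (fun γ => ζ γ ≫ k)
  tensor : ∀ (Γ' Γ : V) (X Y : D) (ζ : (𝟙_ V ⟶ Γ' ⊗ Γ) → (X ⟶ Y)),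
    Phi (Γ' ⊗ Γ) X Y ζ
      = (b.assoc Γ' Γ X).hom ≫
          Phi Γ' (b.act Γ X) Y (fun γ' =>
            Phi Γ X Y (fun γ => ζ ((ρ_ (𝟙_ V)).inv ≫ (γ' ⊗ₘ γ))))

/-! The axioms of a strong functor can be checked pointwise: evaluated at points
`γ : I ⟶ Γ` via `f ↦ f⁻(γ)`, each becomes an identity between ordinary morphisms of `C`
(the associativity axiom because `(α ≫ (Γ' ▷ f) ≫ g)⁻(γ' ⊗ γ) = f⁻(γ) ≫ g⁻(γ')`), which
`F` preserves by functoriality. The naturality and tensor laws of `Φ` carry these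
pointwise identities back to `F̂`; strong naturality of `τ` is likewise the ordinary
naturality of `τ` at each point. -/

namespace LeftAction

variable {V : Type u₁} [Category.{v₁} V] [MonoidalCategory V]
variable {C : Type u₂} [Category.{v₂} C] (a : LeftAction V C)

lemma actHom_comp {Γ Δ Θ : V} (u : Γ ⟶ Δ) (v : Δ ⟶ Θ) (X : C) :
    a.actHom (u ≫ v) X = a.actHom u X ≫ a.actHom v X := by
  rw [actHom, Functor.map_comp, NatTrans.comp_app]

lemma lam_inv_comp_actMap {X Y : C} (h : X ⟶ Y) :
    (a.lam X).inv ≫ a.actMap (𝟙_ V) h = h ≫ (a.lam Y).inv := by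
  rw [Iso.inv_comp_eq, ← Category.assoc, Iso.eq_comp_inv]
  exact a.lam_natural h

lemma actHom_rightUnitor_inv_comp_assoc_hom (X : C) :
    a.actHom (ρ_ (𝟙_ V)).inv X ≫ (a.assoc (𝟙_ V) (𝟙_ V) X).hom
      = a.actMap (𝟙_ V) (a.lam X).inv := by
  rw [← cancel_mono (a.actMap (𝟙_ V) (a.lam X).hom), Category.assoc, a.triangle]
  simp

lemma actHom_tensorHom_comp_assoc_hom {Γ' Δ' Γ Δ : V} (u : Γ' ⟶ Δ') (v : Γ ⟶ Δ) (X : C) :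
    a.actHom (u ⊗ₘ v) X ≫ (a.assoc Δ' Δ X).hom
      = (a.assoc Γ' Γ X).hom ≫ a.actHom u (a.act Γ X) ≫ a.actMap Δ' (a.actHom v X) := by
  simpa using a.assoc_natural u v (𝟙 X)

lemma actHom_tensorPoint_comp_assoc_hom {Γ' Γ : V} (γ' : 𝟙_ V ⟶ Γ') (γ : 𝟙_ V ⟶ Γ) (X : C) :
    (a.lam X).inv ≫ a.actHom ((ρ_ (𝟙_ V)).inv ≫ (γ' ⊗ₘ γ)) X ≫ (a.assoc Γ' Γ X).hom
      = (a.lam X).inv ≫ a.actHom γ' X ≫ a.actMap Γ' ((a.lam X).inv ≫ a.actHom γ X) := by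
  calc _ = (a.lam X).inv ≫ a.actMap (𝟙_ V) (a.lam X).inv ≫ a.actHom γ' (a.act (𝟙_ V) X)
          ≫ a.actMap Γ' (a.actHom γ X) := by
        rw [actHom_comp, Category.assoc, actHom_tensorHom_comp_assoc_hom,
          reassoc_of% actHom_rightUnitor_inv_comp_assoc_hom]
    _ = _ := by
        rw [NatTrans.naturality_assoc, ← Functor.map_comp]

lemma papp_actHom_comp {Γ Δ : V} (u : Γ ⟶ Δ) {X Y : C} (f : a.act Δ X ⟶ Y)
    (γ : 𝟙_ V ⟶ Γ) : a.papp (a.actHom u X ≫ f) γ = a.papp f (γ ≫ u) := by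
  rw [papp, papp, actHom_comp, Category.assoc]

lemma papp_id {X Y : C} (f : a.act (𝟙_ V) X ⟶ Y) :
    a.papp f (𝟙 (𝟙_ V)) = (a.lam X).inv ≫ f := by
  simp [papp, actHom]

lemma papp_assoc_hom_comp_actMap_comp {Γ' Γ : V} {X Y Z : C} (f : a.act Γ X ⟶ Y)
    (g : a.act Γ' Y ⟶ Z) (γ' : 𝟙_ V ⟶ Γ') (γ : 𝟙_ V ⟶ Γ) :
    a.papp ((a.assoc Γ' Γ X).hom ≫ a.actMap Γ' f ≫ g) ((ρ_ (𝟙_ V)).inv ≫ (γ' ⊗ₘ γ))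
      = a.papp f γ ≫ a.papp g γ' := by
  calc _ = (a.lam X).inv ≫ a.actHom γ' X ≫ a.actMap Γ' (a.papp f γ) ≫ g := by
        rw [papp, reassoc_of% actHom_tensorPoint_comp_assoc_hom, papp, ← Functor.map_comp_assoc,
          Category.assoc]
    _ = a.papp f γ ≫ (a.lam Y).inv ≫ a.actHom γ' Y ≫ g := by
        rw [← reassoc_of% lam_inv_comp_actMap, NatTrans.naturality_assoc]
    _ = a.papp f γ ≫ a.papp g γ' := rfl

end LeftAction

namespace WFCStructure

variable {V : Type u₁} [Category.{v₁} V] [MonoidalCategory V]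
variable {C : Type u₂} [Category.{v₂} C] {D : Type u₃} [Category.{v₃} D]
variable {b : LeftAction V D} (Φ : WFCStructure b)

lemma Phi_unit (X Y : D) (ζ : (𝟙_ V ⟶ 𝟙_ V) → (X ⟶ Y)) :
    Φ.Phi (𝟙_ V) X Y ζ = (b.lam X).hom ≫ ζ (𝟙 (𝟙_ V)) := by
  rw [← Φ.papp_Phi (𝟙_ V) X Y ζ, LeftAction.papp_id, Iso.hom_inv_id_assoc]

def strongFunctorStr (a : LeftAction V C) (F : C ⥤ D) : StrongFunctorStr a b F.obj where
  smap {Γ X Y} f := Φ.Phi Γ (F.obj X) (F.obj Y) fun γ => F.map (a.papp f γ)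
  natural u X Y f := by
    simp only [Φ.natural_ctx, a.papp_actHom_comp]
  unit X := by
    rw [Phi_unit, a.papp_id, Iso.inv_hom_id, F.map_id, Category.comp_id]
  comp {Γ' Γ X Y Z} f g := by
    -- after the tensor law of `Φ`, both sides read `Φ_Γ' (γ' ↦ F̂⟨Γ⟩ f ≫ F (g⁻ γ'))`
    simp only [Φ.tensor, a.papp_assoc_hom_comp_actMap_comp, F.map_comp, ← Φ.natural_cod,
      Φ.natural_dom]

lemma strongFunctorStr_smap (a : LeftAction V C) (F : C ⥤ D) {Γ : V} {X Y : C}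
    (f : a.act Γ X ⟶ Y) :
    (Φ.strongFunctorStr a F).smap f = Φ.Phi Γ (F.obj X) (F.obj Y) fun γ => F.map (a.papp f γ) :=
  rfl

lemma strongFunctorStr_smap_lam_hom_comp (a : LeftAction V C) (F : C ⥤ D) {X Y : C}
    (f : X ⟶ Y) :
    (Φ.strongFunctorStr a F).smap ((a.lam X).hom ≫ f) = (b.lam (F.obj X)).hom ≫ F.map f := by
  rw [strongFunctorStr_smap, Phi_unit, a.papp_id, Iso.inv_hom_id_assoc]

lemma Phi_map_papp_comp_app {a : LeftAction V C} {F G : C ⥤ D} (τ : F ⟶ G) {Γ : V}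
    {X Y : C} (f : a.act Γ X ⟶ Y) :
    Φ.Phi Γ (F.obj X) (F.obj Y) (fun γ => F.map (a.papp f γ)) ≫ τ.app Y
      = b.actMap Γ (τ.app X) ≫ Φ.Phi Γ (G.obj X) (G.obj Y) (fun γ => G.map (a.papp f γ)) := by
  simp only [Φ.natural_cod, Φ.natural_dom, τ.naturality]

end WFCStructure

/-- given a weak functional completeness structure `Φ` for the
action of `V` on `D`, every functor `F : C ⥤ D` carries a strong functor
structure with underlying ordinary functor `F`, given by
`F̂⟨Γ⟩ f = Φ_Γ (γ ↦ F(f⁻ γ))`; and every natural transformation `τ : F ⟶ G`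
is strong for the structures thus constructed. -/
theorem statement7 {V : Type u₁} [Category.{v₁} V] [MonoidalCategory V]
    {C : Type u₂} [Category.{v₂} C] {D : Type u₃} [Category.{v₃} D]
    (a : LeftAction V C) (b : LeftAction V D) (Φ : WFCStructure b) :
    (∀ F : C ⥤ D, ∃ S : StrongFunctorStr a b F.obj,
      (∀ {Γ : V} {X Y : C} (f : a.act Γ X ⟶ Y),
        S.smap f = Φ.Phi Γ (F.obj X) (F.obj Y) (fun γ => F.map (a.papp f γ))) ∧
      (∀ {X Y : C} (f : X ⟶ Y),
        S.smap ((a.lam X).hom ≫ f) = (b.lam (F.obj X)).hom ≫ F.map f)) ∧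
    (∀ (F G : C ⥤ D) (τ : F ⟶ G) (Γ : V) (X Y : C) (f : a.act Γ X ⟶ Y),
      Φ.Phi Γ (F.obj X) (F.obj Y) (fun γ => F.map (a.papp f γ)) ≫ τ.app Y
        = b.actMap Γ (τ.app X) ≫
            Φ.Phi Γ (G.obj X) (G.obj Y) (fun γ => G.map (a.papp f γ))) :=
  ⟨fun F => ⟨Φ.strongFunctorStr a F, Φ.strongFunctorStr_smap a F,
      Φ.strongFunctorStr_smap_lam_hom_comp a F⟩,
    fun _ _ τ _ _ _ f => Φ.Phi_map_papp_comp_app τ f⟩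
end

section
/- Let F be a strong endofunctor on C (with respect to an action ▷ of V on C). If for every object X the strongly free F-algebra (TX, η_X : X → TX, σ_X : F(TX) → TX) exists, then T carries a strong monad structure whose unit is η and whose Kleisli extension g♯ of g : Γ ▷ X → TY is the unique h : Γ ▷ TX → TY satisfying h ∘ (Γ ▷ η_X) = g and h ∘ (Γ ▷ σ_X) = σ_Y ∘ F⟨Γ⟩h. Moreover the underlying ordinary monad is the algebraically free monad on the underlying functor of F. -/
open CategoryTheory MonoidalCategory

universe v₁ v₂ v₃ u₁ u₂ u₃

/-!
Strong freeness at `Γ = 𝟙_ V`, transported along the unitor `λ`, is ordinary freeness, so the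
free algebras `(T₀ X, σ X)` form a left adjoint to the forgetful functor from `F₀`-algebras,
and `T₀` underlies the induced monad. Each strong Kleisli law holds because both of its sides
solve the same pair of equations, whose solution is unique by strong freeness.

The monad of any left adjoint `L ⊣ forget F` is algebraically free on `F`: an Eilenberg–Moore
algebra `α : T A ⟶ A` gives the `F`-algebra `F A ⟶ F (T A) ⟶ T A ⟶ A` (through `η` and the
structure map of `L A`), and an `F`-algebra `B` gives back the counit `L B ⟶ B`. By uniqueness
of maps out of free algebras, the two constructions are mutually inverse.
-/

namespace CategoryTheory

theorem Monad.Algebra.eqToHom_f {C : Type*} [Category C] {T : Monad C} {A B : T.Algebra}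
    (h : A = B) : (eqToHom h).f = eqToHom (congrArg Monad.Algebra.A h) := by
  subst h; rfl

namespace Endofunctor.Algebra

variable {C : Type*} [Category C] {F : C ⥤ C}

theorem eqToHom_f {A B : Algebra F} (h : A = B) :
    (eqToHom h).f = eqToHom (congrArg Algebra.a h) := by
  subst h; rfl

def IsFreeOn {X : C} (A : Algebra F) (η : X ⟶ A.a) : Prop :=
  ∀ (B : Algebra F) (g : X ⟶ B.a), ∃! h : A ⟶ B, η ≫ h.f = g

section FreeAlgebraMonad

variable {T₀ : C → C} {η₀ : ∀ X, X ⟶ T₀ X} {σ : ∀ X, F.obj (T₀ X) ⟶ T₀ X}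
  (hfree : ∀ X, IsFreeOn ⟨T₀ X, σ X⟩ (η₀ X))

noncomputable def freeHomEquiv (X : C) (B : Algebra F) :
    ((⟨T₀ X, σ X⟩ : Algebra F) ⟶ B) ≃ (X ⟶ B.a) :=
  Equiv.ofBijective (fun h => η₀ X ≫ h.f)
    ⟨fun _ _ e => (hfree X B _).unique rfl e.symm,
      fun g => (hfree X B g).exists⟩

noncomputable def freeLift {X : C} {B : Algebra F} (g : X ⟶ B.a) :
    (⟨T₀ X, σ X⟩ : Algebra F) ⟶ B :=
  (freeHomEquiv hfree X B).symm g

theorem eq_freeLift {X : C} {B : Algebra F} {g : X ⟶ B.a}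
    (h : (⟨T₀ X, σ X⟩ : Algebra F) ⟶ B) (hη : η₀ X ≫ h.f = g) : h = freeLift hfree g :=
  (Equiv.eq_symm_apply _).2 hη

theorem freeHomEquiv_comp (X : C) {B B' : Algebra F} (h : (⟨T₀ X, σ X⟩ : Algebra F) ⟶ B)
    (k : B ⟶ B') : freeHomEquiv hfree X B' (h ≫ k) = freeHomEquiv hfree X B h ≫ k.f :=
  (Category.assoc _ _ _).symm

noncomputable def freeAlgebraAdjunction :
    Adjunction.leftAdjointOfEquiv (G := forget F) (freeHomEquiv hfree)
      (fun X _ _ k h => freeHomEquiv_comp hfree X h k) ⊣ forget F :=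
  Adjunction.adjunctionOfEquivLeft _ _

noncomputable abbrev freeAlgebraMonad : Monad C := (freeAlgebraAdjunction hfree).toMonad

theorem freeAlgebraMonad_η_app (X : C) : (freeAlgebraMonad hfree).η.app X = η₀ X :=
  Category.comp_id (η₀ X)

theorem freeAlgebraMonad_map {X Y : C} (f : X ⟶ Y) :
    (freeAlgebraMonad hfree).map f = (freeLift hfree (B := ⟨T₀ Y, σ Y⟩) (f ≫ η₀ Y)).f := by
  show (freeLift hfree (B := ⟨T₀ Y, σ Y⟩) (f ≫ η₀ Y ≫ 𝟙 _)).f = _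
  rw [Category.comp_id]

theorem freeAlgebraMonad_μ_app (X : C) :
    (freeAlgebraMonad hfree).μ.app X = (freeLift hfree (B := ⟨T₀ X, σ X⟩) (𝟙 (T₀ X))).f :=
  rfl

end FreeAlgebraMonad

section MonadicForget

variable {L : C ⥤ Algebra F} (adj : L ⊣ forget F)

def monadAlgebraStr (A : adj.toMonad.Algebra) : F.obj A.A ⟶ A.A :=
  F.map (adj.unit.app A.A) ≫ (L.obj A.A).str ≫ A.a

theorem str_comp_monadAlgebra_a (A : adj.toMonad.Algebra) :
    (L.obj A.A).str ≫ A.a = F.map A.a ≫ monadAlgebraStr adj A := by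
  -- `T.obj X` and `(L.obj X).a` agree only up to unfolding; the typed `let`s keep `rw` working.
  let X := A.A
  let α : (L.obj X).a ⟶ X := A.a
  let η (Y : C) : Y ⟶ (L.obj Y).a := adj.unit.app Y
  let μ : L.obj (L.obj X).a ⟶ L.obj X := adj.counit.app _
  have hassoc : μ.f ≫ α = (L.map α).f ≫ α := A.assoc
  have hnat : α ≫ η X = η (L.obj X).a ≫ (L.map α).f := adj.unit.naturality α
  have htri : η (L.obj X).a ≫ μ.f = 𝟙 _ := adj.right_triangle_components _
  change (L.obj X).str ≫ α = F.map α ≫ F.map (η X) ≫ (L.obj X).str ≫ α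
  calc (L.obj X).str ≫ α
      = F.map (η (L.obj X).a ≫ μ.f) ≫ (L.obj X).str ≫ α := by
        rw [htri, F.map_id, Category.id_comp]
    _ = F.map (η (L.obj X).a) ≫ (L.obj (L.obj X).a).str ≫ (L.map α).f ≫ α := by
        rw [F.map_comp_assoc, μ.h_assoc, hassoc]
    _ = F.map α ≫ F.map (η X) ≫ (L.obj X).str ≫ α := by
        rw [← (L.map α).h_assoc, ← F.map_comp_assoc, ← hnat, F.map_comp_assoc]

theorem map_f_comp_monadAlgebraStr {A B : adj.toMonad.Algebra} (f : A ⟶ B) :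
    F.map f.f ≫ monadAlgebraStr adj B = monadAlgebraStr adj A ≫ f.f := by
  let α : (L.obj A.A).a ⟶ A.A := A.a
  let β : (L.obj B.A).a ⟶ B.A := B.a
  let η (Y : C) : Y ⟶ (L.obj Y).a := adj.unit.app Y
  have hf : (L.map f.f).f ≫ β = α ≫ f.f := f.h
  have hnat : f.f ≫ η B.A = η A.A ≫ (L.map f.f).f := adj.unit.naturality f.f
  change F.map f.f ≫ F.map (η B.A) ≫ (L.obj B.A).str ≫ β
    = (F.map (η A.A) ≫ (L.obj A.A).str ≫ α) ≫ f.f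
  rw [← F.map_comp_assoc, hnat, F.map_comp_assoc, (L.map f.f).h_assoc, hf]
  simp only [Category.assoc]

def monadAlgebraToAlgebra : adj.toMonad.Algebra ⥤ Algebra F where
  obj A := ⟨A.A, monadAlgebraStr adj A⟩
  map f := ⟨f.f, map_f_comp_monadAlgebraStr adj f⟩

theorem counit_app_monadAlgebraToAlgebra (A : adj.toMonad.Algebra) :
    adj.counit.app ((monadAlgebraToAlgebra adj).obj A)
      = ⟨A.a, (str_comp_monadAlgebra_a adj A).symm⟩ := by
  apply (adj.homEquiv _ _).injective
  rw [Adjunction.homEquiv_unit, Adjunction.homEquiv_unit]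
  exact (adj.right_triangle_components _).trans A.unit.symm

theorem monadAlgebraStr_comparison_obj (B : Algebra F) :
    monadAlgebraStr adj ((Monad.comparison adj).obj B) = B.str := by
  let η : B.a ⟶ (L.obj B.a).a := adj.unit.app B.a
  let c : L.obj B.a ⟶ B := adj.counit.app B
  have htri : η ≫ c.f = 𝟙 _ := adj.right_triangle_components B
  change F.map η ≫ (L.obj B.a).str ≫ c.f = B.str
  rw [← c.h, ← F.map_comp_assoc, htri, F.map_id, Category.id_comp]

theorem monadAlgebraToAlgebra_comp_comparison :
    monadAlgebraToAlgebra adj ⋙ Monad.comparison adj = 𝟭 _ := by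
  refine Functor.ext (fun A => ?_) (fun A B f => ?_)
  · change Monad.Algebra.mk A.A _ _ _ = A
    obtain ⟨X, α, _, _⟩ := A
    congr 1
    rw [counit_app_monadAlgebraToAlgebra]
    rfl
  · ext
    rw [Monad.Algebra.comp_f, Monad.Algebra.comp_f, Monad.Algebra.eqToHom_f,
      Monad.Algebra.eqToHom_f]
    show f.f = 𝟙 _ ≫ f.f ≫ 𝟙 _
    simp

theorem comparison_comp_monadAlgebraToAlgebra :
    Monad.comparison adj ⋙ monadAlgebraToAlgebra adj = 𝟭 _ := by
  refine Functor.ext (fun B => ?_) (fun A B f => ?_)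
  · change Algebra.mk B.a (monadAlgebraStr adj ((Monad.comparison adj).obj B)) = B
    rw [monadAlgebraStr_comparison_obj]
  · ext
    rw [comp_f, comp_f, eqToHom_f, eqToHom_f]
    show f.f = 𝟙 _ ≫ f.f ≫ 𝟙 _
    simp

theorem monadAlgebraToAlgebra_comp_forget :
    monadAlgebraToAlgebra adj ⋙ forget F = adj.toMonad.forget :=
  rfl

end MonadicForget

end Endofunctor.Algebra

end CategoryTheory

namespace LeftAction

variable {V : Type u₁} [Category.{v₁} V] [MonoidalCategory V]
  {C : Type u₂} [Category.{v₂} C] (a : LeftAction V C)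

theorem actMap_comp_actHom {Γ Δ : V} (u : Γ ⟶ Δ) {X Y : C} (f : X ⟶ Y) :
    a.actMap Γ f ≫ a.actHom u Y = a.actHom u X ≫ a.actMap Δ f :=
  (a.F.map u).naturality f

theorem comp_lam_inv {X Y : C} (f : X ⟶ Y) :
    f ≫ (a.lam Y).inv = (a.lam X).inv ≫ a.actMap (𝟙_ V) f := by
  rw [Iso.comp_inv_eq, Category.assoc, a.lam_natural, Iso.inv_hom_id_assoc]

theorem actMap_comp_assoc_hom (Γ' Γ : V) {X Y : C} (f : X ⟶ Y) :
    a.actMap (Γ' ⊗ Γ) f ≫ (a.assoc Γ' Γ Y).hom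
      = (a.assoc Γ' Γ X).hom ≫ a.actMap Γ' (a.actMap Γ f) := by
  simpa using a.assoc_natural (𝟙 Γ') (𝟙 Γ) f

theorem actMap_unit_comp_eq_iff {X Z B : C} (φ : X ⟶ Z) (k : a.act (𝟙_ V) Z ⟶ B)
    (g : X ⟶ B) :
    a.actMap (𝟙_ V) φ ≫ k = (a.lam X).hom ≫ g ↔ φ ≫ (a.lam Z).inv ≫ k = g := by
  rw [reassoc_of% comp_lam_inv, Iso.inv_comp_eq]

end LeftAction

namespace Strength

variable {V : Type u₁} [Category.{v₁} V] [MonoidalCategory V]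
  {C : Type u₂} [Category.{v₂} C] {D : Type u₃} [Category.{v₃} D]
  {a : LeftAction V C} {b : LeftAction V D} {F : C ⥤ D}

theorem str_unit_eq (s : Strength a b F) (X : C) :
    s.str (𝟙_ V) X = (b.lam (F.obj X)).hom ≫ F.map (a.lam X).inv := by
  rw [← s.str_unit X, Category.assoc, ← F.map_comp, Iso.hom_inv_id, F.map_id,
    Category.comp_id]

theorem actMap_unit_comp_eq_iff {F : C ⥤ C} (s : Strength a a F) {Z B : C}
    (φ : F.obj Z ⟶ Z) (k : a.act (𝟙_ V) Z ⟶ B) (β : F.obj B ⟶ B) :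
    a.actMap (𝟙_ V) φ ≫ k = (s.str (𝟙_ V) Z ≫ F.map k) ≫ β
      ↔ φ ≫ (a.lam Z).inv ≫ k = F.map ((a.lam Z).inv ≫ k) ≫ β := by
  rw [reassoc_of% a.comp_lam_inv, F.map_comp_assoc, s.str_unit_eq, Category.assoc,
    Category.assoc, Iso.inv_comp_eq]

end Strength

section StronglyFree

open Endofunctor.Algebra (IsFreeOn freeLift eq_freeLift)

variable {V : Type u₁} [Category.{v₁} V] [MonoidalCategory V]
  {C : Type u₂} [Category.{v₂} C] {a : LeftAction V C} {F₀ : C ⥤ C}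

def IsStronglyFreeOn (s : Strength a a F₀) {X : C} (A : Endofunctor.Algebra F₀)
    (η : X ⟶ A.a) : Prop :=
  ∀ (Γ : V) (B : C) (b : F₀.obj B ⟶ B) (g : a.act Γ X ⟶ B),
    ∃! h : a.act Γ A.a ⟶ B,
      a.actMap Γ η ≫ h = g ∧ a.actMap Γ A.str ≫ h = (s.str Γ A.a ≫ F₀.map h) ≫ b

namespace IsStronglyFreeOn

variable {s : Strength a a F₀} {X : C} {A : Endofunctor.Algebra F₀} {η : X ⟶ A.a}
  (hA : IsStronglyFreeOn s A η)

noncomputable def lift (Γ : V) {B : C} (b : F₀.obj B ⟶ B) (g : a.act Γ X ⟶ B) :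
    a.act Γ A.a ⟶ B :=
  (hA Γ B b g).choose

theorem actMap_η_comp_lift (Γ : V) {B : C} (b : F₀.obj B ⟶ B) (g : a.act Γ X ⟶ B) :
    a.actMap Γ η ≫ hA.lift Γ b g = g :=
  (hA Γ B b g).choose_spec.1.1

theorem actMap_str_comp_lift (Γ : V) {B : C} (b : F₀.obj B ⟶ B) (g : a.act Γ X ⟶ B) :
    a.actMap Γ A.str ≫ hA.lift Γ b g = (s.str Γ A.a ≫ F₀.map (hA.lift Γ b g)) ≫ b :=
  (hA Γ B b g).choose_spec.1.2

theorem eq_lift {Γ : V} {B : C} {b : F₀.obj B ⟶ B} {g : a.act Γ X ⟶ B}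
    (h : a.act Γ A.a ⟶ B) (hη : a.actMap Γ η ≫ h = g)
    (hstr : a.actMap Γ A.str ≫ h = (s.str Γ A.a ≫ F₀.map h) ≫ b) :
    h = hA.lift Γ b g :=
  (hA Γ B b g).choose_spec.2 h ⟨hη, hstr⟩

theorem lift_actHom_comp {Γ Δ : V} (u : Γ ⟶ Δ) {B : C} (b : F₀.obj B ⟶ B)
    (f : a.act Δ X ⟶ B) :
    hA.lift Γ b (a.actHom u X ≫ f) = a.actHom u A.a ≫ hA.lift Δ b f := by
  refine (hA.eq_lift _ ?_ ?_).symm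
  · rw [reassoc_of% a.actMap_comp_actHom, actMap_η_comp_lift]
  · rw [reassoc_of% a.actMap_comp_actHom, actMap_str_comp_lift]
    simp only [Category.assoc, F₀.map_comp]
    rw [reassoc_of% s.natural_fst]

theorem lift_lam_hom_comp_η : hA.lift (𝟙_ V) A.str ((a.lam X).hom ≫ η) = (a.lam A.a).hom :=
  (hA.eq_lift _ (a.lam_natural η) (by rw [a.lam_natural A.str, s.str_unit A.a])).symm

theorem assoc_hom_comp_lift {Y : C} {A' : Endofunctor.Algebra F₀} {η' : Y ⟶ A'.a}
    (hA' : IsStronglyFreeOn s A' η') (Γ' Γ : V) {B : C} (b : F₀.obj B ⟶ B)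
    (f : a.act Γ X ⟶ A'.a) (g : a.act Γ' Y ⟶ B) :
    (a.assoc Γ' Γ A.a).hom ≫ a.actMap Γ' (hA.lift Γ A'.str f) ≫ hA'.lift Γ' b g
      = hA.lift (Γ' ⊗ Γ) b ((a.assoc Γ' Γ X).hom ≫ a.actMap Γ' f ≫ hA'.lift Γ' b g) := by
  refine hA.eq_lift _ ?_ ?_
  · rw [reassoc_of% a.actMap_comp_assoc_hom, ← Functor.map_comp_assoc, actMap_η_comp_lift]
  · rw [reassoc_of% a.actMap_comp_assoc_hom, ← Functor.map_comp_assoc, actMap_str_comp_lift]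
    simp only [Functor.map_comp, Category.assoc]
    rw [hA'.actMap_str_comp_lift Γ' b g]
    slice_lhs 3 4 => rw [s.natural_snd]
    slice_lhs 1 3 => rw [s.str_assoc]
    simp only [Category.assoc]

noncomputable def unitLift {B : Endofunctor.Algebra F₀} (g : X ⟶ B.a) : A ⟶ B where
  f := (a.lam A.a).inv ≫ hA.lift (𝟙_ V) B.str ((a.lam X).hom ≫ g)
  h := ((s.actMap_unit_comp_eq_iff _ _ _).1 (hA.actMap_str_comp_lift _ _ _)).symm

theorem η_comp_unitLift_f {B : Endofunctor.Algebra F₀} (g : X ⟶ B.a) :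
    η ≫ (hA.unitLift g).f = g :=
  (a.actMap_unit_comp_eq_iff _ _ _).1 (hA.actMap_η_comp_lift _ _ _)

theorem isFreeOn (hA : IsStronglyFreeOn s A η) : IsFreeOn A η := by
  intro B g
  refine ⟨hA.unitLift g, hA.η_comp_unitLift_f g, fun h hh => ?_⟩
  ext
  change h.f = (a.lam A.a).inv ≫ _
  rw [Iso.eq_inv_comp]
  refine hA.eq_lift _ ?_ ?_
  · rw [a.actMap_unit_comp_eq_iff, Iso.inv_hom_id_assoc, hh]
  · rw [s.actMap_unit_comp_eq_iff, Iso.inv_hom_id_assoc, h.h]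

end IsStronglyFreeOn

theorem freeLift_eq_unitLift {s : Strength a a F₀} {T₀ : C → C} {η₀ : ∀ X : C, X ⟶ T₀ X}
    {σ : ∀ X : C, F₀.obj (T₀ X) ⟶ T₀ X} (hfree : ∀ X, IsStronglyFreeOn s ⟨T₀ X, σ X⟩ (η₀ X))
    {X : C} {B : Endofunctor.Algebra F₀} (g : X ⟶ B.a) :
    freeLift (fun X => (hfree X).isFreeOn) g = (hfree X).unitLift g :=
  (eq_freeLift _ _ ((hfree X).η_comp_unitLift_f g)).symm

end StronglyFree

/-- let `F₀` be a strong endofunctor on `C` (a functor with a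
strength `s`, acting on morphisms `f : Γ ▷ X ⟶ Y` by
`F⟨Γ⟩f = F₀.map f ∘ str`). If for every `X` the strongly free `F`-algebra
`(T₀ X, η₀ X, σ X)` exists, then `T₀` carries a strong monad structure with
unit `η₀`, whose Kleisli extension `g♯` of `g : Γ ▷ X ⟶ T₀ Y` is the unique
`h` with `h ∘ (Γ ▷ η₀) = g` and `h ∘ (Γ ▷ σ) = σ ∘ F⟨Γ⟩h`; moreover the
underlying ordinary monad is algebraically free on `F₀`. -/
theorem statement13 {V : Type u₁} [Category.{v₁} V] [MonoidalCategory V]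
    {C : Type u₂} [Category.{v₂} C] (a : LeftAction V C)
    (F₀ : C ⥤ C) (s : Strength a a F₀)
    (T₀ : C → C) (η₀ : ∀ X : C, X ⟶ T₀ X) (σ : ∀ X : C, F₀.obj (T₀ X) ⟶ T₀ X)
    (hfree : ∀ (X : C) (Γ : V) (B : C) (b : F₀.obj B ⟶ B) (g : a.act Γ X ⟶ B),
      ∃! h : a.act Γ (T₀ X) ⟶ B,
        a.actMap Γ (η₀ X) ≫ h = g ∧
        a.actMap Γ (σ X) ≫ h = (s.str Γ (T₀ X) ≫ F₀.map h) ≫ b) :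
    ∃ ext : ∀ (Γ : V) (X Y : C), (a.act Γ X ⟶ T₀ Y) → (a.act Γ (T₀ X) ⟶ T₀ Y),
      -- naturality in Γ
      (∀ {Γ Δ : V} (u : Γ ⟶ Δ) (X Y : C) (f : a.act Δ X ⟶ T₀ Y),
        ext Γ X Y (a.actHom u X ≫ f) = a.actHom u (T₀ X) ≫ ext Δ X Y f) ∧
      -- the three strong monad laws
      (∀ X : C,
        ext (𝟙_ V) X X ((a.lam X).hom ≫ η₀ X) = (a.lam (T₀ X)).hom) ∧
      (∀ (Γ : V) (X Y : C) (f : a.act Γ X ⟶ T₀ Y),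
        a.actMap Γ (η₀ X) ≫ ext Γ X Y f = f) ∧
      (∀ (Γ' Γ : V) (X Y Z : C)
          (f : a.act Γ X ⟶ T₀ Y) (g : a.act Γ' Y ⟶ T₀ Z),
        (a.assoc Γ' Γ (T₀ X)).hom ≫ a.actMap Γ' (ext Γ X Y f) ≫ ext Γ' Y Z g
          = ext (Γ' ⊗ Γ) X Z
              ((a.assoc Γ' Γ X).hom ≫ a.actMap Γ' f ≫ ext Γ' Y Z g)) ∧
      -- `ext g` is the unique morphism of the strongly free algebra property
      (∀ (Γ : V) (X Y : C) (g : a.act Γ X ⟶ T₀ Y),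
        a.actMap Γ (η₀ X) ≫ ext Γ X Y g = g ∧
        a.actMap Γ (σ X) ≫ ext Γ X Y g
          = (s.str Γ (T₀ X) ≫ F₀.map (ext Γ X Y g)) ≫ σ Y) ∧
      -- the underlying ordinary monad is algebraically free on `F₀`
      (∃ (T : Monad C) (hobj : ∀ X : C, T.obj X = T₀ X),
        (∀ X : C, T.η.app X = η₀ X ≫ eqToHom (hobj X).symm) ∧
        (∀ {X Y : C} (f : X ⟶ Y),
          T.map f = eqToHom (hobj X) ≫
            ((a.lam (T₀ X)).inv ≫
              ext (𝟙_ V) X Y ((a.lam X).hom ≫ f ≫ η₀ Y)) ≫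
            eqToHom (hobj Y).symm) ∧
        (∀ X : C,
          T.μ.app X = eqToHom ((hobj (T.obj X)).trans (congrArg T₀ (hobj X))) ≫
            ((a.lam (T₀ (T₀ X))).inv ≫
              ext (𝟙_ V) (T₀ X) X ((a.lam (T₀ X)).hom)) ≫
            eqToHom (hobj X).symm) ∧
        (∃ (Φ : T.Algebra ⥤ Endofunctor.Algebra F₀)
            (Ψ : Endofunctor.Algebra F₀ ⥤ T.Algebra),
          Φ ⋙ Ψ = 𝟭 _ ∧ Ψ ⋙ Φ = 𝟭 _ ∧
          Φ ⋙ Endofunctor.Algebra.forget F₀ = T.forget)) := by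
  have hsfree (X : C) : IsStronglyFreeOn s ⟨T₀ X, σ X⟩ (η₀ X) := hfree X
  have hfreeOn (X : C) := (hsfree X).isFreeOn
  let adj := Endofunctor.Algebra.freeAlgebraAdjunction hfreeOn
  refine ⟨fun Γ X Y => (hsfree X).lift Γ (σ Y), fun u X _ f => (hsfree X).lift_actHom_comp u _ f,
    fun X => (hsfree X).lift_lam_hom_comp_η, fun Γ X _ f => (hsfree X).actMap_η_comp_lift Γ _ f,
    fun Γ' Γ X Y _ f g => (hsfree X).assoc_hom_comp_lift (hsfree Y) Γ' Γ _ f g,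
    fun Γ X _ g => ⟨(hsfree X).actMap_η_comp_lift Γ _ g, (hsfree X).actMap_str_comp_lift Γ _ g⟩,
    Endofunctor.Algebra.freeAlgebraMonad hfreeOn, fun _ => rfl, fun X => ?_, fun f => ?_,
    fun X => ?_, Endofunctor.Algebra.monadAlgebraToAlgebra adj, Monad.comparison adj,
    Endofunctor.Algebra.monadAlgebraToAlgebra_comp_comparison adj,
    Endofunctor.Algebra.comparison_comp_monadAlgebraToAlgebra adj,
    Endofunctor.Algebra.monadAlgebraToAlgebra_comp_forget adj⟩
  · exact (Endofunctor.Algebra.freeAlgebraMonad_η_app hfreeOn X).trans (Category.comp_id _).symm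
  · rw [Endofunctor.Algebra.freeAlgebraMonad_map, freeLift_eq_unitLift hsfree]
    show _ = 𝟙 _ ≫ _ ≫ 𝟙 _
    simp [IsStronglyFreeOn.unitLift]
  · rw [Endofunctor.Algebra.freeAlgebraMonad_μ_app, freeLift_eq_unitLift hsfree]
    show _ = 𝟙 _ ≫ _ ≫ 𝟙 _
    simp [IsStronglyFreeOn.unitLift]
end
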